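/- arXiv:2507.17458 — 2 statements merged into one kernel-verified Lean document; each statement's English description precedes it below -/
import Mathlib

section
/- If an item x falls in the bucket with index i of a sketch with parameter γ (i.e., γ^{i-1} < x ≤ γ^i), then x falls in the bucket with index ⌈i/2⌉ of the collapsed sketch with parameter γ² (i.e., (γ²)^{⌈i/2⌉-1} < x ≤ (γ²)^{⌈i/2⌉}). -/
/-!
Writing `j = ⌈i/2⌉`, the integer `2j` is `i` or `i + 1`, so `2(j - 1) ≤ i - 1` and `i ≤ 2j`.
Since `(γ²)^k = γ^(2k)` and `k ↦ γ^k` is monotone for `γ ≥ 1`, the bucket `(γ^(i-1), γ^i]` lies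
inside `(γ^(2(j-1)), γ^(2j)]`.
-/

theorem Int.ceil_intCast_div_two_bounds {α : Type*} [Field α] [LinearOrder α]
    [IsStrictOrderedRing α] [FloorRing α] (i : ℤ) :
    i ≤ 2 * ⌈(i : α) / 2⌉ ∧ 2 * ⌈(i : α) / 2⌉ ≤ i + 1 := by
  have hle : (i : α) / 2 ≤ ⌈(i : α) / 2⌉ := Int.le_ceil _
  have hlt : (⌈(i : α) / 2⌉ : α) < (i : α) / 2 + 1 := Int.ceil_lt_add_one _
  constructor
  · exact_mod_cast (by linarith : (i : α) ≤ 2 * ⌈(i : α) / 2⌉)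
  · have : 2 * ⌈(i : α) / 2⌉ < i + 2 := by
      exact_mod_cast (by linarith : (2 * ⌈(i : α) / 2⌉ : α) < i + 2)
    omega

section Bucket

variable {α : Type*} [Field α] [LinearOrder α] [IsStrictOrderedRing α]

def InBucket (γ : α) (i : ℤ) (x : α) : Prop :=
  γ ^ (i - 1) < x ∧ x ≤ γ ^ i

theorem InBucket.collapse {γ x : α} {i : ℤ} (hγ : 1 ≤ γ) (h : InBucket γ i x) :
    InBucket (γ ^ 2) ⌈(i : ℚ) / 2⌉ x := by
  obtain ⟨hlo, hhi⟩ := h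
  obtain ⟨hi_le, hle_i⟩ := Int.ceil_intCast_div_two_bounds (α := ℚ) i
  have hpow (k : ℤ) : (γ ^ 2) ^ k = γ ^ (2 * k) := by rw [zpow_mul, zpow_ofNat]
  rw [InBucket, hpow, hpow]
  constructor
  · exact (zpow_le_zpow_right₀ hγ (by omega)).trans_lt hlo
  · exact hhi.trans (zpow_le_zpow_right₀ hγ hi_le)

end Bucket

theorem collapse_bucket_mapping_general (γ x : ℝ) (i : ℤ) (hγ : 1 < γ)
    (hlo : γ ^ (i - 1) < x) (hhi : x ≤ γ ^ i) :
    (γ ^ 2) ^ (⌈(i : ℚ) / 2⌉ - 1) < x ∧ x ≤ (γ ^ 2) ^ ⌈(i : ℚ) / 2⌉ :=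
  InBucket.collapse hγ.le ⟨hlo, hhi⟩

theorem collapse_bucket_mapping (γ x : ℝ) (i : ℤ) (hγ : 1 < γ) (hx : 0 < x)
    (hlo : γ ^ (i - 1) < x) (hhi : x ≤ γ ^ i) :
    (γ ^ 2) ^ (⌈(i : ℚ) / 2⌉ - 1) < x ∧ x ≤ (γ ^ 2) ^ ⌈(i : ℚ) / 2⌉ :=
  collapse_bucket_mapping_general γ x i hγ hlo hhi
end

section
/- Let γ > 1 and suppose all inputs lie in [x_min, x_max] ⊆ ℝ_{>0}. If γ ≥ (x_max/x_min)^{1/(m-1)} for an integer m ≥ 2, then the number of distinct bucket indices ⌈log_γ x⌉ over x ∈ [x_min, x_max] is at most m. -/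
/-!
Bucket indices are monotone in `x`, so they all lie between `⌈log_γ x_min⌉` and `⌈log_γ x_max⌉`.
The hypothesis on `γ` says `x_max / x_min ≤ γ ^ (m - 1)`, i.e. `log_γ x_max ≤ log_γ x_min + (m - 1)`,
and since `⌈t + k⌉ = ⌈t⌉ + k` for integers `k`, the indices fit into an integer interval of length `m`.
-/

open Real Set

namespace Real

variable {b x y : ℝ}

lemma logb_le_logb_add_of_div_le_pow (hb : 1 < b) (hx : 0 < x) (hy : 0 < y) {k : ℕ}
    (hk : y / x ≤ b ^ k) : logb b y ≤ logb b x + k := by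
  have hdiv : logb b (y / x) ≤ k := by
    rwa [logb_le_iff_le_rpow hb (div_pos hy hx), rpow_natCast]
  rw [logb_div hy.ne' hx.ne'] at hdiv
  linarith

lemma ceil_logb_le_ceil_logb_add_of_div_le_pow (hb : 1 < b) (hx : 0 < x) (hy : 0 < y) {k : ℕ}
    (hk : y / x ≤ b ^ k) : ⌈logb b y⌉ ≤ ⌈logb b x⌉ + k := by
  calc ⌈logb b y⌉ ≤ ⌈logb b x + (k : ℤ)⌉ := by
        exact_mod_cast Int.ceil_le_ceil (logb_le_logb_add_of_div_le_pow hb hx hy hk)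
    _ = ⌈logb b x⌉ + k := Int.ceil_add_intCast _ _

lemma ceil_logb_mem_Icc_of_div_le_pow {xmin xmax : ℝ} (hb : 1 < b) (hmin : 0 < xmin) {k : ℕ}
    (hk : xmax / xmin ≤ b ^ k) (hx : x ∈ Icc xmin xmax) :
    ⌈logb b x⌉ ∈ Icc ⌈logb b xmin⌉ (⌈logb b xmin⌉ + k) := by
  have hxpos : 0 < x := hmin.trans_le hx.1
  have hxmax : 0 < xmax := hxpos.trans_le hx.2
  refine ⟨Int.ceil_le_ceil (logb_le_logb_of_le hb hmin hx.1), ?_⟩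
  calc ⌈logb b x⌉ ≤ ⌈logb b xmax⌉ := Int.ceil_le_ceil (logb_le_logb_of_le hb hxpos hx.2)
    _ ≤ ⌈logb b xmin⌉ + k := ceil_logb_le_ceil_logb_add_of_div_le_pow hb hmin hxmax hk

lemma ncard_ceil_logb_Icc_le_of_div_le_pow {xmin xmax : ℝ} (hb : 1 < b) (hmin : 0 < xmin)
    {k : ℕ} (hk : xmax / xmin ≤ b ^ k) :
    {n : ℤ | ∃ x ∈ Icc xmin xmax, n = ⌈logb b x⌉}.ncard ≤ k + 1 := by
  set a := ⌈logb b xmin⌉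
  have hsub : {n : ℤ | ∃ x ∈ Icc xmin xmax, n = ⌈logb b x⌉} ⊆ Icc a (a + k) := by
    rintro n ⟨x, hx, rfl⟩
    exact ceil_logb_mem_Icc_of_div_le_pow hb hmin hk hx
  calc _ ≤ (Icc a (a + k)).ncard := ncard_le_ncard hsub (finite_Icc _ _)
    _ = k + 1 := by
      rw [← Finset.coe_Icc, ncard_coe_finset, Int.card_Icc]
      omega

end Real

theorem bucket_count_bound (γ xmin xmax : ℝ) (m : ℕ)
    (hγ : 1 < γ) (hmin : 0 < xmin) (hle : xmin ≤ xmax) (hm : 2 ≤ m)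
    (hγbig : (xmax / xmin) ^ ((1 : ℝ) / (m - 1)) ≤ γ) :
    {n : ℤ | ∃ x ∈ Set.Icc xmin xmax, n = ⌈Real.logb γ x⌉}.ncard ≤ m := by
  obtain ⟨k, rfl⟩ : ∃ k : ℕ, m = k + 1 := ⟨m - 1, by omega⟩
  have hk : (0 : ℝ) < k := by exact_mod_cast (by omega : 0 < k)
  have hratio : xmax / xmin ≤ γ ^ k := by
    have hnonneg : 0 ≤ xmax / xmin := div_nonneg (hmin.trans_le hle).le hmin.le
    push_cast at hγbig
    rwa [add_sub_cancel_right, one_div,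
      rpow_inv_le_iff_of_pos hnonneg (by linarith) hk, rpow_natCast] at hγbig
  exact ncard_ceil_logb_Icc_le_of_div_le_pow hγ hmin hratio
end
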